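/- For every j ≥ 1, there exists an integer p with 1 ≤ p < 3^j, gcd(p, 3^j) = 1, such that all partial quotients of the continued fraction expansion of p/3^j are at most 3. -/

import Mathlib

/-!
Write `M(l)` for the product of the matrices `!![0, 1; 1, a]` over `a ∈ l`; its second column is
`(p, q)` with `cf l = p / q`, and `det M(l) = ±1` makes `p` and `q` coprime. Since `M(l)ᵀ = M(l.reverse)`,
the denominator of `m ++ w ++ m.reverse` is the quadratic form of `M(w)` evaluated at the last row
`(x, y)` of `M(m)`. For `w = [1, 3]` this form is `(x + 2y)²` and for `w = [1, 1, 2, 2]` it is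
`3 (x + 2y)²`, where `x + 2y` is the denominator of `m ++ [1, 1]`. Hence a word with entries in
`{1, 2, 3}`, of the shape `[1, 1] ++ c ++ [1, 1]` and with denominator `3 ^ j`, folds into words of
the same kind with denominators `3 ^ (2 j)` and `3 ^ (2 j + 1)` (Niederreiter). Starting from explicit
words for `4 ≤ j < 8` this reaches every `j ≥ 4`; the cases `j < 4` are done by hand.
-/

open Matrix

/-- The generator matrix ((0,1),(1,a)). -/
def genM (a : ℕ) : Matrix (Fin 2) (Fin 2) ℤ := !![0, 1; 1, (a : ℤ)]

/-- Product of generators along a finite sequence. -/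
def prodM (l : List ℕ) : Matrix (Fin 2) (Fin 2) ℤ := (l.map genM).prod

/-- Finite continued fraction [a₁,...,a_k] = 1/(a₁ + 1/(a₂ + ⋯ + 1/a_k)). -/
def cf : List ℕ → ℚ
  | [] => 0
  | a :: t => 1 / ((a : ℚ) + cf t)

section Continuants

lemma prodM_nil : prodM [] = 1 := rfl

lemma prodM_cons (a : ℕ) (t : List ℕ) : prodM (a :: t) = genM a * prodM t := by
  simp [prodM]

lemma prodM_append (l m : List ℕ) : prodM (l ++ m) = prodM l * prodM m := by
  simp [prodM]

lemma genM_transpose (a : ℕ) : (genM a)ᵀ = genM a := by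
  ext i j; fin_cases i <;> fin_cases j <;> rfl

lemma prodM_reverse (l : List ℕ) : prodM l.reverse = (prodM l)ᵀ := by
  induction l with
  | nil => simp [prodM_nil]
  | cons a t ih =>
    rw [List.reverse_cons, prodM_append, ih, prodM_cons, prodM_nil, mul_one, prodM_cons,
      transpose_mul, genM_transpose]

lemma prodM_cons_apply_zero (a : ℕ) (t : List ℕ) (i : Fin 2) :
    prodM (a :: t) 0 i = prodM t 1 i := by
  simp [prodM_cons, genM, mul_apply, Fin.sum_univ_two]

lemma prodM_cons_apply_one (a : ℕ) (t : List ℕ) (i : Fin 2) :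
    prodM (a :: t) 1 i = prodM t 0 i + a * prodM t 1 i := by
  simp [prodM_cons, genM, mul_apply, Fin.sum_univ_two]

lemma prodM_nonneg (l : List ℕ) (i k : Fin 2) : 0 ≤ prodM l i k := by
  induction l generalizing i with
  | nil => fin_cases i <;> fin_cases k <;> simp [prodM_nil, one_apply]
  | cons a t ih =>
    fin_cases i
    · simpa [prodM_cons_apply_zero] using ih 1
    · simpa [prodM_cons_apply_one] using add_nonneg (ih 0) (mul_nonneg (Int.natCast_nonneg a) (ih 1))

lemma one_le_prodM_one_one {l : List ℕ} (hl : ∀ a ∈ l, 1 ≤ a) : 1 ≤ prodM l 1 1 := by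
  induction l with
  | nil => simp [prodM_nil]
  | cons a t ih =>
    have ha : (1 : ℤ) ≤ a := by exact_mod_cast hl a List.mem_cons_self
    have ht := ih fun b hb => hl b (List.mem_cons_of_mem a hb)
    rw [prodM_cons_apply_one]
    nlinarith [prodM_nonneg t 0 1]

lemma one_le_prodM_zero_one {a : ℕ} {t : List ℕ} (ht : ∀ b ∈ t, 1 ≤ b) :
    1 ≤ prodM (a :: t) 0 1 := by
  rw [prodM_cons_apply_zero]
  exact one_le_prodM_one_one ht

lemma prodM_zero_one_lt_one_one {a b : ℕ} {t : List ℕ} (h : ∀ c ∈ a :: b :: t, 1 ≤ c) :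
    prodM (a :: b :: t) 0 1 < prodM (a :: b :: t) 1 1 := by
  have ha : (1 : ℤ) ≤ a := by exact_mod_cast h a List.mem_cons_self
  have hp := one_le_prodM_zero_one (a := b) (t := t) fun c hc => h c (by simp [hc])
  rw [prodM_cons_apply_zero, prodM_cons_apply_one a]
  nlinarith [prodM_nonneg (b :: t) 1 1]

lemma cf_eq_div {l : List ℕ} (hl : ∀ a ∈ l, 1 ≤ a) :
    cf l = (prodM l 0 1 : ℚ) / prodM l 1 1 := by
  induction l with
  | nil => simp [cf, prodM_nil]
  | cons a t ih =>
    have ht : ∀ b ∈ t, 1 ≤ b := fun b hb => hl b (List.mem_cons_of_mem a hb)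
    have hq : (0 : ℚ) < prodM t 1 1 := by exact_mod_cast one_le_prodM_one_one ht
    rw [cf, ih ht, prodM_cons_apply_zero, prodM_cons_apply_one]
    push_cast
    field_simp
    ring

lemma det_prodM (l : List ℕ) : (prodM l).det = (-1) ^ l.length := by
  induction l with
  | nil => simp [prodM_nil]
  | cons a t ih =>
    rw [prodM_cons, det_mul, ih, List.length_cons, pow_succ']
    simp [genM, det_fin_two_of]

lemma isCoprime_prodM_zero_one_one_one (l : List ℕ) : IsCoprime (prodM l 0 1) (prodM l 1 1) := by
  have hd := det_prodM l
  rw [det_fin_two] at hd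
  set u := prodM l 0 0 * prodM l 1 1 - prodM l 0 1 * prodM l 1 0
  have hu : u * u = 1 := by rw [hd, ← pow_add, ← two_mul, pow_mul]; norm_num
  exact ⟨-(u * prodM l 1 0), u * prodM l 0 0, by linear_combination hu⟩

lemma exists_coprime_cf_eq_div {l : List ℕ} {n : ℕ} (hl : ∀ a ∈ l, 1 ≤ a) (hlen : 2 ≤ l.length)
    (hq : prodM l 1 1 = n) :
    ∃ p : ℕ, 1 ≤ p ∧ p < n ∧ Nat.gcd p n = 1 ∧ cf l = (p : ℚ) / n := by
  obtain ⟨p, hp⟩ := Int.eq_ofNat_of_zero_le (prodM_nonneg l 0 1)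
  obtain _ | ⟨a, _ | ⟨b, t⟩⟩ := l
  all_goals simp only [List.length_nil, List.length_cons] at hlen
  any_goals omega
  refine ⟨p, ?_, ?_, ?_, ?_⟩
  · have := one_le_prodM_zero_one (a := a) fun c hc => hl c (List.mem_cons_of_mem a hc)
    omega
  · have := prodM_zero_one_lt_one_one hl
    omega
  · have := isCoprime_prodM_zero_one_one_one (a :: b :: t)
    rwa [hp, hq, Int.isCoprime_iff_gcd_eq_one, Int.gcd_natCast_natCast] at this
  · rw [cf_eq_div hl, hp, hq]
    push_cast
    rfl

end Continuants

section Folding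

lemma prodM_append_append_reverse_one_one (m w : List ℕ) :
    prodM (m ++ w ++ m.reverse) 1 1 =
      prodM w 0 0 * prodM m 1 0 ^ 2 + (prodM w 0 1 + prodM w 1 0) * prodM m 1 0 * prodM m 1 1 +
        prodM w 1 1 * prodM m 1 1 ^ 2 := by
  simp only [prodM_append, prodM_reverse, mul_apply, transpose_apply, Fin.sum_univ_two]
  ring

lemma prodM_append_one_one (m : List ℕ) :
    prodM (m ++ [1, 1]) 1 1 = prodM m 1 0 + 2 * prodM m 1 1 := by
  have h : prodM [1, 1] = !![1, 1; 1, 2] := by decide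
  simp only [prodM_append, h, mul_apply, Fin.sum_univ_two, of_apply, cons_val', cons_val_zero,
    cons_val_one, cons_val_fin_one]
  ring

lemma prodM_fold_one_three (m : List ℕ) :
    prodM (m ++ [1, 3] ++ m.reverse) 1 1 = prodM (m ++ [1, 1]) 1 1 ^ 2 := by
  have h : prodM [1, 3] = !![1, 3; 1, 4] := by decide
  rw [prodM_append_append_reverse_one_one, prodM_append_one_one, h]
  simp only [of_apply, cons_val', cons_val_zero, cons_val_one, cons_val_fin_one]
  ring

lemma prodM_fold_one_one_two_two (m : List ℕ) :
    prodM (m ++ [1, 1, 2, 2] ++ m.reverse) 1 1 = 3 * prodM (m ++ [1, 1]) 1 1 ^ 2 := by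
  have h : prodM [1, 1, 2, 2] = !![3, 7; 5, 12] := by decide
  rw [prodM_append_append_reverse_one_one, prodM_append_one_one, h]
  simp only [of_apply, cons_val', cons_val_zero, cons_val_one, cons_val_fin_one]
  ring

/-- The end blocks `[1, 1]` survive folding: the word is `m ++ [1, 1]`, and `m.reverse` again ends
in `[1, 1]`. -/
def NiederreiterWord (j : ℕ) (l : List ℕ) : Prop :=
  (∀ a ∈ l, 1 ≤ a ∧ a ≤ 3) ∧ (∃ c, l = [1, 1] ++ c ++ [1, 1]) ∧ prodM l 1 1 = 3 ^ j

lemma NiederreiterWord.fold {j k : ℕ} {l w : List ℕ} (hl : NiederreiterWord j l)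
    (hw : ∀ a ∈ w, 1 ≤ a ∧ a ≤ 3)
    (hfold : ∀ m, prodM (m ++ w ++ m.reverse) 1 1 = 3 ^ k * prodM (m ++ [1, 1]) 1 1 ^ 2) :
    ∃ l', NiederreiterWord (2 * j + k) l' := by
  obtain ⟨hb, ⟨c, rfl⟩, hq⟩ := hl
  set m := [1, 1] ++ c
  refine ⟨m ++ w ++ m.reverse, ?_, ⟨c ++ w ++ c.reverse, by simp [m]⟩, ?_⟩
  · intro a ha
    simp only [List.mem_append, List.mem_reverse] at ha
    rcases ha with (ha | ha) | ha
    · exact hb a (List.mem_append_left _ ha)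
    · exact hw a ha
    · exact hb a (List.mem_append_left _ ha)
  · rw [hfold, hq]
    ring

lemma exists_niederreiterWord {j : ℕ} (hj : 4 ≤ j) : ∃ l, NiederreiterWord j l := by
  induction j using Nat.strong_induction_on with
  | _ j ih =>
  obtain hj8 | hj8 := lt_or_ge j 8
  · interval_cases j
    · exact ⟨[1, 1, 2, 1, 1, 1, 1, 1, 1], by decide, ⟨[2, 1, 1, 1, 1], rfl⟩, by decide⟩
    · exact ⟨[1, 1, 2, 1, 3, 1, 1, 1, 1, 1], by decide, ⟨[2, 1, 3, 1, 1, 1], rfl⟩, by decide⟩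
    · exact ⟨[1, 1, 3, 1, 3, 1, 2, 1, 1, 1, 1], by decide, ⟨[3, 1, 3, 1, 2, 1, 1], rfl⟩,
        by decide⟩
    · exact ⟨[1, 1, 2, 1, 2, 2, 2, 3, 1, 1, 1, 1], by decide, ⟨[2, 1, 2, 2, 2, 3, 1, 1], rfl⟩,
        by decide⟩
  · obtain ⟨r, rfl | rfl⟩ := Nat.even_or_odd' j
    · obtain ⟨l, hl⟩ := ih r (by omega) (by omega)
      exact hl.fold (w := [1, 3]) (by decide) fun m => by
        rw [prodM_fold_one_three, pow_zero, one_mul]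
    · obtain ⟨l, hl⟩ := ih r (by omega) (by omega)
      exact hl.fold (w := [1, 1, 2, 2]) (by decide) fun m => by
        rw [prodM_fold_one_one_two_two, pow_one]

end Folding

theorem stmt_5 (j : ℕ) (hj : 1 ≤ j) :
    ∃ p : ℕ, 1 ≤ p ∧ p < 3 ^ j ∧ Nat.gcd p (3 ^ j) = 1 ∧
      ∃ l : List ℕ, (∀ a ∈ l, 1 ≤ a ∧ a ≤ 3) ∧ cf l = (p : ℚ) / (3 ^ j : ℚ) := by
  obtain ⟨l, hb, hlen, hq⟩ : ∃ l : List ℕ, (∀ a ∈ l, 1 ≤ a ∧ a ≤ 3) ∧ 2 ≤ l.length ∧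
      prodM l 1 1 = ((3 ^ j : ℕ) : ℤ) := by
    obtain hj4 | hj4 := lt_or_ge j 4
    · interval_cases j
      · exact ⟨[2, 1], by decide, by decide, by decide⟩
      · exact ⟨[2, 3, 1], by decide, by decide, by decide⟩
      · exact ⟨[2, 1, 2, 3], by decide, by decide, by decide⟩
    · obtain ⟨l, hb, ⟨c, rfl⟩, hq⟩ := exists_niederreiterWord hj4
      exact ⟨_, hb, by simp, by rw [hq]; push_cast; rfl⟩
  obtain ⟨p, hp1, hpq, hgcd, hcf⟩ := exists_coprime_cf_eq_div (fun a ha => (hb a ha).1) hlen hq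
  exact ⟨p, hp1, hpq, hgcd, l, hb, by rw [hcf]; push_cast; rfl⟩
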